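/- arXiv:1612.04960 — 2 statements merged into one kernel-verified Lean document; each statement's English description precedes it below -/
import Mathlib

section
/- The pair (α_n, β_n) with α_0 = 1, α_n = (−1)^n q^{3n²/2}(q^{−n/2} + q^{n/2}) for n ≥ 1, and β_n = 1/(q;q)_n, is a Bailey pair with parameters (1, q). -/
/- The Bailey pair with `α₀ = 1`,
`αₙ = (−1)ⁿ q^{3n²/2}(q^{−n/2} + q^{n/2})` for `n ≥ 1` (the half-integer
exponents combine to the integers `n(3n−1)/2` and `n(3n+1)/2`), and
`βₙ = 1/(q;q)ₙ`, with parameters `(1, q)`. -/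

noncomputable section

/-- The variable `q`, as a rational function over ℚ. -/
def q : RatFunc ℚ := RatFunc.X

/-- Finite q-Pochhammer symbol `(a;x)_n`. -/
def poch (a x : RatFunc ℚ) (n : ℕ) : RatFunc ℚ :=
  ∏ j ∈ Finset.range n, (1 - a * x ^ j)

/-- `(α, β)` is a Bailey pair with parameters `(a, x)`. -/
def IsBaileyPair (a x : RatFunc ℚ) (α β : ℕ → RatFunc ℚ) : Prop :=
  ∀ n, β n = ∑ r ∈ Finset.range (n + 1),
    α r / (poch x x (n - r) * poch (a * x) x (n + r))

/-!
Let `u(n, r) = α_r / ((x;x)_{n-r} (x;x)_{n+r})` and `S(n) = ∑_{r ≤ n} u(n, r)`. Writing the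
pentagonal exponents as `3·C(r,2) + r` and `3·C(r,2) + 2r`, the differences
`(1 - x^m) u(m, r) - u(m - 1, r)` telescope in `r` against the WZ-type certificate
`G(m, r) = (-1)^r x^{3·C(r,2) + m} / ((x;x)_{m-r} (x;x)_{m+r-1})` (`pentagonalCert`), which
vanishes at `r = 0` and `r > m`. Hence `(1 - x^m) S(m) = S(m - 1)`, and `S(n) = 1/(x;x)_n` by
induction.
-/

lemma two_mul_choose_two (r : ℕ) : 2 * r.choose 2 = r * (r - 1) := by
  rw [Nat.choose_two_right, Nat.mul_div_cancel' (Nat.even_mul_pred_self r).two_dvd]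

lemma choose_two_succ (r : ℕ) : (r + 1).choose 2 = r.choose 2 + r := by
  rw [Nat.choose_succ_succ', Nat.choose_one_right, add_comm]

lemma mul_three_mul_sub_one_div_two (r : ℕ) : r * (3 * r - 1) / 2 = 3 * r.choose 2 + r := by
  have h := two_mul_choose_two r
  rcases r with _ | i
  · rfl
  · rw [show 3 * (i + 1) - 1 = 3 * i + 2 by omega]
    rw [Nat.add_sub_cancel] at h
    apply Nat.div_eq_of_eq_mul_left two_pos
    nlinarith

lemma mul_three_mul_add_one_div_two (r : ℕ) : r * (3 * r + 1) / 2 = 3 * r.choose 2 + 2 * r := by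
  have h := two_mul_choose_two r
  rcases r with _ | i
  · rfl
  · rw [Nat.add_sub_cancel] at h
    apply Nat.div_eq_of_eq_mul_left two_pos
    nlinarith

lemma poch_zero (a x : RatFunc ℚ) : poch a x 0 = 1 :=
  Finset.prod_range_zero _

lemma poch_self_succ (x : RatFunc ℚ) (n : ℕ) :
    poch x x (n + 1) = poch x x n * (1 - x ^ (n + 1)) := by
  rw [poch, Finset.prod_range_succ, ← pow_succ']
  rfl

def pentagonalAlpha (x : RatFunc ℚ) (n : ℕ) : RatFunc ℚ :=
  if n = 0 then 1 else (-1) ^ n * (x ^ (n * (3 * n - 1) / 2) + x ^ (n * (3 * n + 1) / 2))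

lemma pentagonalAlpha_of_ne_zero (x : RatFunc ℚ) {r : ℕ} (hr : r ≠ 0) :
    pentagonalAlpha x r = (-1) ^ r * x ^ (3 * r.choose 2) * (x ^ r + x ^ (2 * r)) := by
  rw [pentagonalAlpha, if_neg hr, mul_three_mul_sub_one_div_two, mul_three_mul_add_one_div_two,
    pow_add, pow_add]
  ring

def baileySummand (x : RatFunc ℚ) (n r : ℕ) : RatFunc ℚ :=
  pentagonalAlpha x r / (poch x x (n - r) * poch x x (n + r))

def pentagonalCert (x : RatFunc ℚ) (m r : ℕ) : RatFunc ℚ :=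
  if r = 0 ∨ m < r then 0
  else (-1) ^ r * x ^ (3 * r.choose 2) * x ^ m / (poch x x (m - r) * poch x x (m + r - 1))

lemma pentagonalCert_zero (x : RatFunc ℚ) (m : ℕ) : pentagonalCert x m 0 = 0 :=
  if_pos (Or.inl rfl)

lemma pentagonalCert_of_lt (x : RatFunc ℚ) {m r : ℕ} (h : m < r) : pentagonalCert x m r = 0 :=
  if_pos (Or.inr h)

lemma pentagonalCert_of_le (x : RatFunc ℚ) {m r : ℕ} (hr : r ≠ 0) (h : r ≤ m) :
    pentagonalCert x m r =
      (-1) ^ r * x ^ (3 * r.choose 2) * x ^ m / (poch x x (m - r) * poch x x (m + r - 1)) :=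
  if_neg (by omega)

section

variable {x : RatFunc ℚ} (hx : ∀ k, x ^ (k + 1) ≠ 1)
include hx

lemma one_sub_pow_succ_ne_zero (k : ℕ) : 1 - x ^ (k + 1) ≠ 0 :=
  sub_ne_zero.mpr (hx k).symm

lemma poch_self_ne_zero (n : ℕ) : poch x x n ≠ 0 := by
  induction n with
  | zero => simp [poch_zero]
  | succ n ih => rw [poch_self_succ]; exact mul_ne_zero ih (one_sub_pow_succ_ne_zero hx n)

lemma baileySummand_telescope_zero (n : ℕ) :
    (1 - x ^ (n + 1)) * baileySummand x (n + 1) 0 - baileySummand x n 0 =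
      pentagonalCert x (n + 1) 0 - pentagonalCert x (n + 1) 1 := by
  have hP := poch_self_ne_zero hx n
  have hy := one_sub_pow_succ_ne_zero hx n
  rw [pentagonalCert_zero, pentagonalCert_of_le x one_ne_zero (by omega), baileySummand,
    baileySummand, pentagonalAlpha, if_pos rfl]
  simp only [Nat.sub_zero, Nat.add_zero, Nat.add_sub_cancel, poch_self_succ,
    show (1 : ℕ).choose 2 = 0 from rfl]
  field_simp
  ring

lemma baileySummand_telescope {r : ℕ} (hr : r ≠ 0) (j : ℕ) :
    (1 - x ^ (r + j + 1)) * baileySummand x (r + j + 1) r - baileySummand x (r + j) r =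
      pentagonalCert x (r + j + 1) r - pentagonalCert x (r + j + 1) (r + 1) := by
  have hA := poch_self_ne_zero hx j
  have hB := poch_self_ne_zero hx (2 * r + j)
  have hz := one_sub_pow_succ_ne_zero hx j
  have hw := one_sub_pow_succ_ne_zero hx (2 * r + j)
  rw [pentagonalCert_of_le x hr (by omega), pentagonalCert_of_le x r.add_one_ne_zero (by omega),
    baileySummand, baileySummand, pentagonalAlpha_of_ne_zero x hr, choose_two_succ]
  simp only [show r + j + 1 - r = j + 1 by omega, show r + j + 1 + r = 2 * r + j + 1 by omega,
    show r + j - r = j by omega, show r + j + r = 2 * r + j by omega, Nat.add_sub_cancel,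
    show r + j + 1 - (r + 1) = j by omega, show r + j + 1 + (r + 1) - 1 = 2 * r + j + 1 by omega,
    poch_self_succ]
  field_simp
  ring

lemma baileySummand_telescope_top (n : ℕ) :
    (1 - x ^ (n + 1)) * baileySummand x (n + 1) (n + 1) =
      pentagonalCert x (n + 1) (n + 1) - pentagonalCert x (n + 1) (n + 1 + 1) := by
  have hB := poch_self_ne_zero hx (2 * n + 1)
  have hw := one_sub_pow_succ_ne_zero hx (2 * n + 1)
  rw [pentagonalCert_of_lt x (by omega : n + 1 < n + 1 + 1),
    pentagonalCert_of_le x n.add_one_ne_zero le_rfl, baileySummand,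
    pentagonalAlpha_of_ne_zero x n.add_one_ne_zero, Nat.sub_self,
    show n + 1 + (n + 1) = 2 * n + 1 + 1 by omega, Nat.add_sub_cancel,
    poch_self_succ x (2 * n + 1), poch_zero]
  field_simp
  ring

lemma one_sub_pow_mul_sum_baileySummand_succ (n : ℕ) :
    (1 - x ^ (n + 1)) * ∑ r ∈ Finset.range (n + 2), baileySummand x (n + 1) r =
      ∑ r ∈ Finset.range (n + 1), baileySummand x n r := by
  have htelescope : ∀ r ∈ Finset.range (n + 1),
      (1 - x ^ (n + 1)) * baileySummand x (n + 1) r - baileySummand x n r =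
        pentagonalCert x (n + 1) r - pentagonalCert x (n + 1) (r + 1) := by
    intro r hr
    rcases Nat.eq_zero_or_pos r with rfl | hpos
    · exact baileySummand_telescope_zero hx n
    · obtain ⟨j, rfl⟩ : ∃ j, n = r + j := ⟨n - r, by simp at hr; omega⟩
      exact baileySummand_telescope hx hpos.ne' j
  rw [← sub_eq_zero, Finset.mul_sum, Finset.sum_range_succ, add_sub_right_comm,
    ← Finset.sum_sub_distrib, Finset.sum_congr rfl htelescope, baileySummand_telescope_top hx n,
    ← Finset.sum_range_succ
      (fun r => pentagonalCert x (n + 1) r - pentagonalCert x (n + 1) (r + 1)),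
    Finset.sum_range_sub', pentagonalCert_zero, pentagonalCert_of_lt x (by omega), sub_zero]

lemma sum_baileySummand (n : ℕ) :
    ∑ r ∈ Finset.range (n + 1), baileySummand x n r = (poch x x n)⁻¹ := by
  induction n with
  | zero => simp [baileySummand, pentagonalAlpha, poch_zero]
  | succ n ih =>
    have hy := one_sub_pow_succ_ne_zero hx n
    rw [poch_self_succ, mul_inv, ← ih, ← one_sub_pow_mul_sum_baileySummand_succ hx n]
    field_simp

theorem isBaileyPair_pentagonalAlpha :
    IsBaileyPair 1 x (pentagonalAlpha x) fun n => (poch x x n)⁻¹ := fun n => by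
  simp only [one_mul]
  exact (sum_baileySummand hx n).symm

end

lemma q_pow_succ_ne_one (k : ℕ) : q ^ (k + 1) ≠ 1 := by
  intro h
  have := congrArg (RatFunc.intDegree (K := ℚ)) h
  rw [q, ← RatFunc.algebraMap_X, ← map_pow, RatFunc.intDegree_polynomial,
    RatFunc.intDegree_one, Polynomial.natDegree_X_pow] at this
  omega

theorem bailey_pair_BP2 :
    IsBaileyPair 1 q
      (fun n => if n = 0 then 1 else
        (-1) ^ n * (q ^ (n * (3 * n - 1) / 2) + q ^ (n * (3 * n + 1) / 2)))
      (fun n => (poch q q n)⁻¹) :=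
  isBaileyPair_pentagonalAlpha q_pow_succ_ne_one

end
end

section
/- For integers k ≥ i ≥ 2 and all m, n ≥ 0, F_{k,i}(m,n) = H_{k,i−1}(m,n), where F_{k,i}(m,n) counts overpartitions in O_{k,i}(m,n) whose smallest part is an overlined odd part or a non-overlined even part, and H_{k,i}(m,n) counts those whose smallest part is a non-overlined odd part or an overlined even part. -/
/- `F_{k,i}(m,n) = H_{k,i−1}(m,n)` for `k ≥ i ≥ 2` (He–Ji–Wang–Zhao,
Lemma on the sets `𝔽` and `ℍ`).  Overpartitions are modelled by pairs `(f, g)`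
of multiplicity functions (non-overlined/overlined); parts are ordered
`1̄ < 1 < 2̄ < 2 < ⋯`, so the smallest part of a nonempty overpartition has the
least occurring size `s`, and it is overlined exactly when `g s ≠ 0`. -/

noncomputable section
open scoped Classical

/-- `(f, g)` is an overpartition of `n` with exactly `m` parts. -/
def IsOverpartitionOf (m n : ℕ) (p : (ℕ →₀ ℕ) × (ℕ →₀ ℕ)) : Prop :=
  (∀ t, p.2 t ≤ 1) ∧ p.1 0 = 0 ∧ p.2 0 = 0 ∧
    p.1.sum (fun _ c => c) + p.2.sum (fun _ c => c) = m ∧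
    p.1.sum (fun t c => t * c) + p.2.sum (fun t c => t * c) = n

/-- The defining conditions of the set `O_{k,i}`. -/
def CondO (k i : ℕ) (p : (ℕ →₀ ℕ) × (ℕ →₀ ℕ)) : Prop :=
  p.2 1 + p.1 2 ≤ i - 1 ∧
  (∀ t, 1 ≤ t → p.2 (2 * t) + p.1 (2 * t) + p.2 (2 * t + 1) + p.1 (2 * t + 2) ≤ k - 1) ∧
  (∀ t, 1 ≤ p.1 (2 * t + 1) → p.1 (2 * t + 2) ≤ k - 2)

/-- `s` is the size of the smallest part of the overpartition `p`. -/
def SmallestSize (p : (ℕ →₀ ℕ) × (ℕ →₀ ℕ)) (s : ℕ) : Prop :=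
  p.1 s + p.2 s ≠ 0 ∧ ∀ t < s, p.1 t + p.2 t = 0

/-- Members of `O_{k,i}(m,n)` whose smallest part is an overlined odd part or a
non-overlined even part. -/
def Fset (k i m n : ℕ) : Set ((ℕ →₀ ℕ) × (ℕ →₀ ℕ)) :=
  {p | IsOverpartitionOf m n p ∧ CondO k i p ∧
    ∃ s, SmallestSize p s ∧ ((p.2 s ≠ 0 ∧ Odd s) ∨ (p.2 s = 0 ∧ Even s))}

/-- Members of `O_{k,i}(m,n)` whose smallest part is a non-overlined odd part or
an overlined even part. -/
def Hset (k i m n : ℕ) : Set ((ℕ →₀ ℕ) × (ℕ →₀ ℕ)) :=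
  {p | IsOverpartitionOf m n p ∧ CondO k i p ∧
    ∃ s, SmallestSize p s ∧ ((p.2 s = 0 ∧ Odd s) ∨ (p.2 s ≠ 0 ∧ Even s))}

/-! Toggling the overline of the smallest part `s` moves one copy of `s` between the
non-overlined and the overlined parts. It keeps the number of parts, the weight and the smallest
size, it is an involution, and it exchanges the two kinds of smallest part counted by `F` and `H`.
Since no part lies below `s`, only the constraints meeting `s` change: the bound on
`f_{1̄} + f_2` moves by one (from `i - 1` to `i - 2` or back), and for odd `s = 2t + 1` one unit
passes between the window `f_{2t̄} + f_{2t} + f_{(2t+1)‾} + f_{2t+2} ≤ k - 1` and the rule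
`f_{2t+1} ≥ 1 → f_{2t+2} ≤ k - 2`; for `s = 1` the bound on `f_{1̄} + f_2` plays the window's
role, which is where `i ≤ k` is needed. -/

theorem Finsupp.sum_update_add_sum_update {α M : Type*} [AddCancelCommMonoid M]
    (f g : α →₀ ℕ) (s : α) {a b : ℕ} (hab : a + b = f s + g s) (φ : α → ℕ → M)
    (hφ0 : ∀ t, φ t 0 = 0) (hφadd : ∀ t x y, φ t (x + y) = φ t x + φ t y) :
    (f.update s a).sum φ + (g.update s b).sum φ = f.sum φ + g.sum φ := by
  have hf := f.sum_update_add s a φ hφ0 hφadd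
  have hg := g.sum_update_add s b φ hφ0 hφadd
  apply add_right_cancel (b := φ s (f s) + φ s (g s))
  calc (f.update s a).sum φ + (g.update s b).sum φ + (φ s (f s) + φ s (g s))
      = ((f.update s a).sum φ + φ s (f s)) + ((g.update s b).sum φ + φ s (g s)) := by abel
    _ = f.sum φ + g.sum φ + (φ s a + φ s b) := by rw [hf, hg]; abel
    _ = f.sum φ + g.sum φ + (φ s (f s) + φ s (g s)) := by rw [← hφadd, hab, hφadd]

/-- When `p.2 s ≤ 1`, the overline count at `s` flips to `1 - p.2 s` and the non-overlined count
absorbs the difference, so `p.1 s + p.2 s` is kept. -/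
def toggleOverlineAt (s : ℕ) (p : (ℕ →₀ ℕ) × (ℕ →₀ ℕ)) : (ℕ →₀ ℕ) × (ℕ →₀ ℕ) :=
  (p.1.update s (p.1 s + p.2 s - (1 - p.2 s)), p.2.update s (1 - p.2 s))

section toggleOverlineAt

variable {s : ℕ} {p : (ℕ →₀ ℕ) × (ℕ →₀ ℕ)}

theorem toggleOverlineAt_snd_self : (toggleOverlineAt s p).2 s = 1 - p.2 s := by
  simp [toggleOverlineAt]

theorem toggleOverlineAt_snd_of_ne {t : ℕ} (ht : t ≠ s) : (toggleOverlineAt s p).2 t = p.2 t := by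
  simp [toggleOverlineAt, ht]

theorem toggleOverlineAt_add_apply (hs : p.1 s + p.2 s ≠ 0) (t : ℕ) :
    (toggleOverlineAt s p).1 t + (toggleOverlineAt s p).2 t = p.1 t + p.2 t := by
  by_cases ht : t = s
  · subst ht
    simp only [toggleOverlineAt, Finsupp.coe_update, Function.update_self]
    omega
  · simp [toggleOverlineAt, ht]

theorem toggleOverlineAt_toggleOverlineAt (h1 : p.2 s ≤ 1) (hs : p.1 s + p.2 s ≠ 0) :
    toggleOverlineAt s (toggleOverlineAt s p) = p := by
  have hq : (toggleOverlineAt s p).1 s + (toggleOverlineAt s p).2 s ≠ 0 := by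
    rwa [toggleOverlineAt_add_apply hs]
  have hsnd : (toggleOverlineAt s (toggleOverlineAt s p)).2 = p.2 := by
    ext t
    by_cases ht : t = s
    · subst ht
      rw [toggleOverlineAt_snd_self, toggleOverlineAt_snd_self]
      omega
    · rw [toggleOverlineAt_snd_of_ne ht, toggleOverlineAt_snd_of_ne ht]
  refine Prod.ext (Finsupp.ext fun t => ?_) hsnd
  have := toggleOverlineAt_add_apply hq t
  rw [toggleOverlineAt_add_apply hs, hsnd] at this
  omega

theorem smallestSize_toggleOverlineAt (hs : SmallestSize p s) :
    SmallestSize (toggleOverlineAt s p) s := by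
  simpa only [SmallestSize, toggleOverlineAt_add_apply hs.1] using hs

theorem IsOverpartitionOf.toggleOverlineAt {m n : ℕ} (hp : IsOverpartitionOf m n p)
    (hs : p.1 s + p.2 s ≠ 0) : IsOverpartitionOf m n (toggleOverlineAt s p) := by
  obtain ⟨h1, h10, h20, hm, hn⟩ := hp
  have hs0 : s ≠ 0 := by rintro rfl; omega
  have hab : p.1 s + p.2 s - (1 - p.2 s) + (1 - p.2 s) = p.1 s + p.2 s := by omega
  refine ⟨fun t => ?_, ?_, ?_, ?_, ?_⟩
  · by_cases ht : t = s
    · rw [ht, toggleOverlineAt_snd_self]; omega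
    · rw [toggleOverlineAt_snd_of_ne ht]; exact h1 t
  · have := toggleOverlineAt_add_apply hs 0
    omega
  · rwa [toggleOverlineAt_snd_of_ne hs0.symm]
  · rw [← hm]
    exact p.1.sum_update_add_sum_update p.2 s hab (fun _ c => c) (fun _ => rfl)
      fun _ _ _ => rfl
  · rw [← hn]
    exact p.1.sum_update_add_sum_update p.2 s hab (fun t c => t * c) mul_zero mul_add

end toggleOverlineAt

theorem SmallestSize.unique {p : (ℕ →₀ ℕ) × (ℕ →₀ ℕ)} {s s' : ℕ} (hs : SmallestSize p s)
    (hs' : SmallestSize p s') : s = s' := by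
  rcases lt_trichotomy s s' with h | h | h
  · exact absurd (hs'.2 s h) hs.1
  · exact h
  · exact absurd (hs.2 s' h) hs'.1

def toggleSmallest (p : (ℕ →₀ ℕ) × (ℕ →₀ ℕ)) : (ℕ →₀ ℕ) × (ℕ →₀ ℕ) :=
  if h : ∃ s, SmallestSize p s then toggleOverlineAt h.choose p else p

theorem SmallestSize.toggleSmallest_eq {p : (ℕ →₀ ℕ) × (ℕ →₀ ℕ)} {s : ℕ}
    (hs : SmallestSize p s) : toggleSmallest p = toggleOverlineAt s p := by
  have h : ∃ s, SmallestSize p s := ⟨s, hs⟩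
  rw [toggleSmallest, dif_pos h, h.choose_spec.unique hs]

section CondO

variable {k i s : ℕ} {p : (ℕ →₀ ℕ) × (ℕ →₀ ℕ)}

/-- `omega` cannot identify `p.2 t` with `p.2 s` when `t = s`, so the proofs below restate every
fact about `s` at each index they look at. -/
theorem SmallestSize.toggleOverlineAt_pointwise (hs : SmallestSize p s) (h1 : p.2 s ≤ 1)
    (t : ℕ) :
    (toggleOverlineAt s p).1 t + (toggleOverlineAt s p).2 t = p.1 t + p.2 t ∧
      (t < s → p.1 t + p.2 t = 0) ∧ (t ≠ s → (toggleOverlineAt s p).2 t = p.2 t) ∧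
      (t = s → (toggleOverlineAt s p).2 t + p.2 t = 1) := by
  refine ⟨toggleOverlineAt_add_apply hs.1 t, hs.2 t, toggleOverlineAt_snd_of_ne, ?_⟩
  rintro rfl
  rw [toggleOverlineAt_snd_self]
  omega

theorem CondO.pred_toggleOverlineAt (hp : CondO k (i + 1) p) (hik : i + 1 ≤ k)
    (hs : SmallestSize p s) (hs0 : 0 < s) (h1 : p.2 s ≤ 1)
    (hF : (p.2 s ≠ 0 ∧ Odd s) ∨ (p.2 s = 0 ∧ Even s)) :
    CondO k i (toggleOverlineAt s p) := by
  obtain ⟨hc1, hc2, hc3⟩ := hp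
  rw [Nat.odd_iff, Nat.even_iff] at hF
  have key (t : ℕ) := And.intro (hs.toggleOverlineAt_pointwise h1 t)
    fun (h : t = s) => (h ▸ hF : (p.2 t ≠ 0 ∧ t % 2 = 1) ∨ (p.2 t = 0 ∧ t % 2 = 0))
  refine ⟨?_, fun t ht => ?_, fun t ht => ?_⟩
  · have := key 1; have := key 2; omega
  · have := key (2 * t); have := key (2 * t + 1); have := key (2 * t + 2); have := hc2 t ht
    omega
  · obtain rfl | ht0 := Nat.eq_zero_or_pos t
    · have h30 := hc3 0
      simp only [mul_zero, zero_add] at ht h30 ⊢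
      have := key 1; have := key 2; omega
    · have := key (2 * t + 1); have := key (2 * t + 2); have := hc3 t; have := hc2 t ht0
      omega

theorem CondO.succ_toggleOverlineAt (hp : CondO k i p) (hi : 1 ≤ i) (hik : i + 1 ≤ k)
    (hs : SmallestSize p s) (h1 : p.2 s ≤ 1)
    (hH : (p.2 s = 0 ∧ Odd s) ∨ (p.2 s ≠ 0 ∧ Even s)) :
    CondO k (i + 1) (toggleOverlineAt s p) := by
  obtain ⟨hc1, hc2, hc3⟩ := hp
  rw [Nat.odd_iff, Nat.even_iff] at hH
  have key (t : ℕ) := And.intro (hs.toggleOverlineAt_pointwise h1 t)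
    fun (h : t = s) => (h ▸ hH : (p.2 t = 0 ∧ t % 2 = 1) ∨ (p.2 t ≠ 0 ∧ t % 2 = 0))
  refine ⟨?_, fun t ht => ?_, fun t ht => ?_⟩
  · have := key 1; have := key 2; omega
  · have := key (2 * t); have := key (2 * t + 1); have := key (2 * t + 2); have := hc2 t ht
    have := hc3 t
    have hnext := hc2 (t + 1) (by omega)
    rw [show 2 * (t + 1) = 2 * t + 2 by ring] at hnext
    omega
  · have := key (2 * t + 1); have := key (2 * t + 2); have := hc3 t
    omega

end CondO

section toggleSmallest

variable {k i m n s : ℕ} {p : (ℕ →₀ ℕ) × (ℕ →₀ ℕ)}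

theorem SmallestSize.pos (hs : SmallestSize p s) (hp : IsOverpartitionOf m n p) : 0 < s := by
  obtain ⟨-, h10, h20, -⟩ := hp
  refine Nat.pos_of_ne_zero fun h => hs.1 ?_
  rw [h, h10, h20]

theorem toggleSmallest_toggleSmallest (hp : IsOverpartitionOf m n p) (hs : SmallestSize p s) :
    toggleSmallest (toggleSmallest p) = p := by
  rw [hs.toggleSmallest_eq, (smallestSize_toggleOverlineAt hs).toggleSmallest_eq,
    toggleOverlineAt_toggleOverlineAt (hp.1 s) hs.1]

theorem toggleSmallest_mem_Hset (hik : i + 1 ≤ k) (hp : p ∈ Fset k (i + 1) m n) :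
    toggleSmallest p ∈ Hset k i m n := by
  obtain ⟨hop, hc, s, hs, hF⟩ := hp
  have h1 := hop.1 s
  rw [hs.toggleSmallest_eq]
  refine ⟨hop.toggleOverlineAt hs.1, hc.pred_toggleOverlineAt hik hs (hs.pos hop) h1 hF, s,
    smallestSize_toggleOverlineAt hs, ?_⟩
  rw [toggleOverlineAt_snd_self]
  rcases hF with ⟨h, hpar⟩ | ⟨h, hpar⟩
  · exact Or.inl ⟨by omega, hpar⟩
  · exact Or.inr ⟨by omega, hpar⟩

theorem toggleSmallest_mem_Fset (hi : 1 ≤ i) (hik : i + 1 ≤ k) (hp : p ∈ Hset k i m n) :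
    toggleSmallest p ∈ Fset k (i + 1) m n := by
  obtain ⟨hop, hc, s, hs, hH⟩ := hp
  have h1 := hop.1 s
  rw [hs.toggleSmallest_eq]
  refine ⟨hop.toggleOverlineAt hs.1, hc.succ_toggleOverlineAt hi hik hs h1 hH, s,
    smallestSize_toggleOverlineAt hs, ?_⟩
  rw [toggleOverlineAt_snd_self]
  rcases hH with ⟨h, hpar⟩ | ⟨h, hpar⟩
  · exact Or.inl ⟨by omega, hpar⟩
  · exact Or.inr ⟨by omega, hpar⟩

end toggleSmallest

theorem F_eq_H (k i m n : ℕ) (hi : 2 ≤ i) (hik : i ≤ k) :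
    (Fset k i m n).ncard = (Hset k (i - 1) m n).ncard := by
  obtain ⟨j, rfl⟩ : ∃ j, i = j + 1 := ⟨i - 1, by omega⟩
  rw [Nat.add_sub_cancel]
  have hinv : Set.InvOn toggleSmallest toggleSmallest (Fset k (j + 1) m n) (Hset k j m n) :=
    ⟨fun _ ⟨hop, _, _, hs, _⟩ => toggleSmallest_toggleSmallest hop hs,
      fun _ ⟨hop, _, _, hs, _⟩ => toggleSmallest_toggleSmallest hop hs⟩
  exact (hinv.bijOn (fun _ => toggleSmallest_mem_Hset hik)
    fun _ => toggleSmallest_mem_Fset (by omega) hik).ncard_eq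
end
end
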